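/- For any continuous f and Lipschitz g, h on the Cantor dust CD, the sequence φ_n(f,g,h) = Σ_{𝐬 ∈ Sⁿ} Tr(ρ_𝐬(f)[F, ρ_𝐬(g)][F, ρ_𝐬(h)]M) converges to 0 as n → ∞. -/

import Mathlib

open Matrix

noncomputable def Fop : Matrix (Fin 4) (Fin 4) ℂ :=
  ((Real.sqrt 2 : ℝ) : ℂ)⁻¹ • !![0,0,1,1; 0,0,-1,1; 1,-1,0,0; 1,1,0,0]

/-- Multiplication operator: diagonal of vertex values, ordered v₀, v₂, v₁, v₃. -/
def rho (f : Fin 4 → ℂ) : Matrix (Fin 4) (Fin 4) ℂ :=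
  !![f 0, 0, 0, 0; 0, f 2, 0, 0; 0, 0, f 1, 0; 0, 0, 0, f 3]

def Mmat : Matrix (Fin 4) (Fin 4) ℂ :=
  !![0,1,0,0; -1,0,0,0; 0,0,0,1; 0,0,-1,0]

/-- The four similitudes of the Cantor-dust IFS. -/
noncomputable def ifsMap : Fin 4 → ℝ × ℝ → ℝ × ℝ
  | 0 => fun p => (p.1 / 3, p.2 / 3)
  | 1 => fun p => (p.1 / 3, p.2 / 3 + 2/3)
  | 2 => fun p => (p.1 / 3 + 2/3, p.2 / 3)
  | 3 => fun p => (p.1 / 3 + 2/3, p.2 / 3 + 2/3)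

/-- `f_𝐬 = f_{s₁} ∘ ⋯ ∘ f_{sₙ}`. -/
noncomputable def ifsComp {n : ℕ} (s : Fin n → Fin 4) : ℝ × ℝ → ℝ × ℝ :=
  (List.ofFn s).foldr (fun i g => ifsMap i ∘ g) id

/-- The corners of the unit square, numbered counterclockwise from the origin. -/
noncomputable def corner : Fin 4 → ℝ × ℝ := ![(0, 0), (1, 0), (1, 1), (0, 1)]

/-- The `i`-th vertex of the level-`n` square indexed by `s`. -/
noncomputable def vert {n : ℕ} (s : Fin n → Fin 4) (i : Fin 4) : ℝ × ℝ :=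
  ifsComp s (corner i)

/-- The approximating combinatorial integration. -/
noncomputable def phi (n : ℕ) (f g h : ℝ × ℝ → ℂ) : ℂ :=
  ∑ s : Fin n → Fin 4,
    (rho (f ∘ vert s) *
      (Fop * rho (g ∘ vert s) - rho (g ∘ vert s) * Fop) *
      (Fop * rho (h ∘ vert s) - rho (h ∘ vert s) * Fop) * Mmat).trace

/-!
Expanding the trace, each entry of the commutator `[F, ρ_𝐬(g)]` is an entry of `F` times the
difference of `g` at two vertices of the square `𝐬`. These vertices lie in `CD` (they are images
of the corners of the unit square, which are fixed points of the contractions `ifsMap i` and hence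
lie in every closed nonempty invariant set) and are at distance at most `3⁻ⁿ`. So for Lipschitz
`g`, `h` and bounded `f` each of the `4ⁿ` summands is `O(9⁻ⁿ)`, and `φ_n = O((4/9)ⁿ)`.
-/

lemma ContractingWith.mem_of_isFixedPt {α : Type*} [MetricSpace α] [CompleteSpace α]
    {K : NNReal} {f : α → α} (hf : ContractingWith K f) {s : Set α} (hs : IsClosed s)
    (hne : s.Nonempty) (hmaps : Set.MapsTo f s s) {p : α} (hp : Function.IsFixedPt f p) :
    p ∈ s := by
  obtain ⟨x, hx⟩ := hne
  have : Nonempty α := ⟨x⟩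
  rw [hf.fixedPoint_unique hp]
  exact hs.mem_of_tendsto (hf.tendsto_iterate_fixedPoint x)
    (Filter.Eventually.of_forall fun n => hmaps.iterate n hx)

section TraceBound

variable {ι 𝕜 : Type*} [Fintype ι] [DecidableEq ι]

lemma Matrix.commutator_diagonal_apply [CommRing 𝕜] (F : Matrix ι ι 𝕜) (v : ι → 𝕜) (i j : ι) :
    (F * diagonal v - diagonal v * F) i j = F i j * (v j - v i) := by
  simp only [sub_apply, mul_diagonal, diagonal_mul]
  ring

lemma Matrix.trace_diagonal_mul_mul_mul [CommSemiring 𝕜] (u : ι → 𝕜) (X Y M : Matrix ι ι 𝕜) :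
    (diagonal u * X * Y * M).trace = ∑ i, ∑ j, ∑ k, u i * X i j * Y j k * M k i := by
  simp only [trace, diag_apply, mul_assoc, diagonal_mul]
  simp only [mul_apply, Finset.mul_sum]

lemma norm_trace_diagonal_mul_commutator_mul_commutator_le [NormedField 𝕜]
    {F M : Matrix ι ι 𝕜} (hF : ∀ i j, ‖F i j‖ ≤ 1) (hM : ∀ i j, ‖M i j‖ ≤ 1)
    {u v w : ι → 𝕜} {A B C : ℝ} (hu : ∀ i, ‖u i‖ ≤ A) (hv : ∀ i j, ‖v i - v j‖ ≤ B)
    (hw : ∀ i j, ‖w i - w j‖ ≤ C) :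
    ‖(diagonal u * (F * diagonal v - diagonal v * F) *
      (F * diagonal w - diagonal w * F) * M).trace‖ ≤ Fintype.card ι ^ 3 * (A * B * C) := by
  have hterm : ∀ i j k, ‖u i * (F i j * (v j - v i)) * (F j k * (w k - w j)) * M k i‖
      ≤ A * B * C := by
    intro i j k
    have hA : 0 ≤ A := (norm_nonneg _).trans (hu i)
    have hB : 0 ≤ B := (norm_nonneg _).trans (hv i i)
    have hC : 0 ≤ C := (norm_nonneg _).trans (hw i i)
    simp only [norm_mul]
    calc ‖u i‖ * (‖F i j‖ * ‖v j - v i‖) * (‖F j k‖ * ‖w k - w j‖) * ‖M k i‖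
        ≤ A * (1 * B) * (1 * C) * 1 := by
          gcongr
          exacts [hu i, hF i j, hv j i, hF j k, hw k j, hM k i]
      _ = A * B * C := by ring
  rw [trace_diagonal_mul_mul_mul]
  simp only [commutator_diagonal_apply]
  refine (norm_sum_le_of_le _ fun i _ => norm_sum_le_of_le _ fun j _ =>
    norm_sum_le_of_le _ fun k _ => hterm i j k).trans_eq ?_
  simp only [Finset.sum_const, Finset.card_univ, nsmul_eq_mul]
  ring

end TraceBound

lemma rho_eq_diagonal (a : Fin 4 → ℂ) : rho a = diagonal (a ∘ ![0, 2, 1, 3]) := by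
  ext i j
  fin_cases i <;> fin_cases j <;> rfl

lemma norm_Fop_apply_le_one (i j : Fin 4) : ‖Fop i j‖ ≤ 1 := by
  have hsqrt : |Real.sqrt 2|⁻¹ ≤ 1 := by
    rw [abs_of_nonneg (Real.sqrt_nonneg 2)]
    exact inv_le_one_of_one_le₀ (Real.one_le_sqrt.2 one_le_two)
  fin_cases i <;> fin_cases j <;> simp [Fop] <;> exact hsqrt

lemma norm_Mmat_apply_le_one (i j : Fin 4) : ‖Mmat i j‖ ≤ 1 := by
  fin_cases i <;> fin_cases j <;> simp [Mmat]

lemma dist_ifsMap (i : Fin 4) (x y : ℝ × ℝ) :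
    dist (ifsMap i x) (ifsMap i y) = dist x y / 3 := by
  fin_cases i <;>
    simp [ifsMap, Prod.dist_eq, Real.dist_eq, ← sub_div, abs_div, max_div_div_right]

lemma contractingWith_ifsMap (i : Fin 4) : ContractingWith 3⁻¹ (ifsMap i) :=
  ⟨by norm_num, LipschitzWith.of_dist_le_mul fun x y => by simp [dist_ifsMap, div_eq_inv_mul]⟩

lemma ifsComp_zero (s : Fin 0 → Fin 4) : ifsComp s = id := rfl

lemma ifsComp_succ {n : ℕ} (s : Fin (n + 1) → Fin 4) :
    ifsComp s = ifsMap (s 0) ∘ ifsComp (Fin.tail s) := by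
  simp only [ifsComp, List.ofFn_succ, List.foldr_cons]
  rfl

lemma dist_ifsComp {n : ℕ} (s : Fin n → Fin 4) (x y : ℝ × ℝ) :
    dist (ifsComp s x) (ifsComp s y) = dist x y / 3 ^ n := by
  induction n with
  | zero => simp [ifsComp_zero]
  | succ n ih => rw [ifsComp_succ, Function.comp_apply, Function.comp_apply, dist_ifsMap, ih,
      pow_succ', div_div, mul_comm]

lemma exists_isFixedPt_ifsMap_corner (i : Fin 4) :
    ∃ m : Fin 4, Function.IsFixedPt (ifsMap m) (corner i) := by
  fin_cases i
  exacts [⟨0, by simp [Function.IsFixedPt, ifsMap, corner]⟩,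
    ⟨2, by norm_num [Function.IsFixedPt, ifsMap, corner]⟩,
    ⟨3, by norm_num [Function.IsFixedPt, ifsMap, corner]⟩,
    ⟨1, by norm_num [Function.IsFixedPt, ifsMap, corner]⟩]

lemma dist_corner_le_one (i j : Fin 4) : dist (corner i) (corner j) ≤ 1 := by
  fin_cases i <;> fin_cases j <;> norm_num [corner, Prod.dist_eq, Real.dist_eq]

lemma dist_vert_le {n : ℕ} (s : Fin n → Fin 4) (i j : Fin 4) :
    dist (vert s i) (vert s j) ≤ (1 / 3) ^ n := by
  rw [vert, vert, dist_ifsComp, _root_.one_div_pow]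
  exact div_le_div_of_nonneg_right (dist_corner_le_one i j) (by positivity)

section SelfSimilarSet

variable {S : Set (ℝ × ℝ)} (hS : S = ⋃ i, ifsMap i '' S)
include hS

lemma mapsTo_ifsMap (i : Fin 4) : Set.MapsTo (ifsMap i) S S := fun x hx => by
  rw [hS]
  exact Set.mem_iUnion_of_mem i (Set.mem_image_of_mem _ hx)

lemma mapsTo_ifsComp {n : ℕ} (s : Fin n → Fin 4) : Set.MapsTo (ifsComp s) S S := by
  induction n with
  | zero => exact Set.mapsTo_id S
  | succ n ih => rw [ifsComp_succ]; exact (mapsTo_ifsMap hS _).comp (ih _)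

lemma corner_mem (hclosed : IsClosed S) (hne : S.Nonempty) (i : Fin 4) : corner i ∈ S := by
  obtain ⟨m, hm⟩ := exists_isFixedPt_ifsMap_corner i
  exact (contractingWith_ifsMap m).mem_of_isFixedPt hclosed hne (mapsTo_ifsMap hS m) hm

lemma vert_mem (hclosed : IsClosed S) (hne : S.Nonempty) {n : ℕ} (s : Fin n → Fin 4)
    (i : Fin 4) : vert s i ∈ S :=
  mapsTo_ifsComp hS s (corner_mem hS hclosed hne i)

end SelfSimilarSet

lemma norm_phi_le {S : Set (ℝ × ℝ)} {f g h : ℝ × ℝ → ℂ} {n : ℕ} {C : ℝ} {Kg Kh : NNReal}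
    (hvert : ∀ (s : Fin n → Fin 4) i, vert s i ∈ S) (hf : ∀ x ∈ S, ‖f x‖ ≤ C)
    (hg : LipschitzOnWith Kg g S) (hh : LipschitzOnWith Kh h S) :
    ‖phi n f g h‖ ≤ 64 * C * Kg * Kh * (4 / 9) ^ n := by
  have hdiff : ∀ {K : NNReal} {g : ℝ × ℝ → ℂ}, LipschitzOnWith K g S →
      ∀ (s : Fin n → Fin 4) i j, ‖g (vert s i) - g (vert s j)‖ ≤ K * (1 / 3) ^ n := by
    intro K g hg s i j
    rw [← dist_eq_norm]
    exact (hg.dist_le_mul _ (hvert s i) _ (hvert s j)).trans (by gcongr; exact dist_vert_le s i j)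
  have hterm : ∀ s : Fin n → Fin 4,
      ‖(rho (f ∘ vert s) * (Fop * rho (g ∘ vert s) - rho (g ∘ vert s) * Fop) *
        (Fop * rho (h ∘ vert s) - rho (h ∘ vert s) * Fop) * Mmat).trace‖
        ≤ 64 * (C * (Kg * (1 / 3) ^ n) * (Kh * (1 / 3) ^ n)) := by
    intro s
    simp only [rho_eq_diagonal]
    refine (norm_trace_diagonal_mul_commutator_mul_commutator_le norm_Fop_apply_le_one
      norm_Mmat_apply_le_one (fun i => hf _ (hvert s _)) (fun i j => hdiff hg s _ _)
      (fun i j => hdiff hh s _ _)).trans_eq ?_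
    norm_num
  calc ‖phi n f g h‖ ≤ ∑ _s : Fin n → Fin 4, 64 * (C * (Kg * (1 / 3) ^ n) * (Kh * (1 / 3) ^ n)) :=
        norm_sum_le_of_le _ fun s _ => hterm s
    _ = 64 * C * Kg * Kh * (4 / 9) ^ n := by
      simp only [Finset.sum_const, Finset.card_univ, Fintype.card_fun, Fintype.card_fin,
        nsmul_eq_mul]
      rw [show (4 / 9 : ℝ) = 4 * (1 / 3) * (1 / 3) by norm_num, mul_pow, mul_pow]
      push_cast
      ring

theorem stmt14 (CD : Set (ℝ × ℝ)) (hCDne : CD.Nonempty) (hCDcomp : IsCompact CD)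
    (hCDinv : CD = ⋃ i : Fin 4, ifsMap i '' CD)
    (f g h : ℝ × ℝ → ℂ) (hf : ContinuousOn f CD)
    (hg : ∃ K : NNReal, LipschitzOnWith K g CD)
    (hh : ∃ K : NNReal, LipschitzOnWith K h CD) :
    Filter.Tendsto (fun n => phi n f g h) Filter.atTop (nhds 0) := by
  obtain ⟨Kg, hg⟩ := hg
  obtain ⟨Kh, hh⟩ := hh
  obtain ⟨C, hC⟩ := hCDcomp.exists_bound_of_continuousOn hf
  have hvert : ∀ n (s : Fin n → Fin 4) i, vert s i ∈ CD :=
    fun _ s i => vert_mem hCDinv hCDcomp.isClosed hCDne s i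
  refine squeeze_zero_norm (fun n => norm_phi_le (hvert n) hC hg hh) ?_
  simpa using (tendsto_pow_atTop_nhds_zero_of_lt_one (by norm_num : (0 : ℝ) ≤ 4 / 9)
    (by norm_num)).const_mul (64 * C * Kg * Kh)
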